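/- Let f = (f₁,...,fₙ) : ℝ → ℝⁿ with each f_j measurable, and suppose that lim_{T→∞} (1/T) ∫₀^T e^{2πi(β·f(t))} dt = 0 for all nonzero β ∈ ℝⁿ. Then for every almost periodic function w : ℝⁿ → ℂ, the composite w ∘ f : ℝ → ℂ has a mean value, and M(w ∘ f) = M(w). -/

import Mathlib

open MeasureTheory Filter

/-- A bounded measurable `w : ℝⁿ → ℂ` has *mean value* `M` if
`T⁻ⁿ ∫_{[0,T]ⁿ} w(s) ds → M` as `T → ∞`. -/
def HasMeanValue {n : ℕ} (w : (Fin n → ℝ) → ℂ) (M : ℂ) : Prop :=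
  Tendsto (fun T : ℝ =>
      ((T : ℂ) ^ n)⁻¹ * ∫ s in Set.Icc (0 : Fin n → ℝ) (fun _ => T), w s)
    atTop (nhds M)

/-- A bounded measurable `g : ℝ → ℂ` has *mean value* `M` if
`T⁻¹ ∫_0^T g(t) dt → M` as `T → ∞`. -/
def HasMeanValue1 (g : ℝ → ℂ) (M : ℂ) : Prop :=
  Tendsto (fun T : ℝ => (T : ℂ)⁻¹ * ∫ t in Set.Ioc (0 : ℝ) T, g t) atTop (nhds M)

/-- A *trigonometric polynomial* on `ℝⁿ` is a finite `ℂ`-linear combination of the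
characters `s ↦ e^{i(α·s)}`, `α ∈ ℝⁿ`. -/
def IsTrigPoly {n : ℕ} (p : (Fin n → ℝ) → ℂ) : Prop :=
  ∃ (A : Finset (Fin n → ℝ)) (c : (Fin n → ℝ) → ℂ),
    ∀ s, p s = ∑ α ∈ A, c α * Complex.exp (Complex.I * (↑(∑ i, α i * s i) : ℂ))

/-- `w : ℝⁿ → ℂ` is *almost periodic* if it is a uniform limit of trigonometric
polynomials. -/
def AlmostPeriodic {n : ℕ} (w : (Fin n → ℝ) → ℂ) : Prop :=
  ∀ ε : ℝ, 0 < ε → ∃ p, IsTrigPoly p ∧ ∀ s, ‖w s - p s‖ ≤ ε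

open Topology

/-!
For a character `e^{i α·s}` both means are the Kronecker delta at `α = 0`: along `f` this is the
hypothesis (with `β = α / 2π`), and on the box `[0,T]ⁿ` the mean factors into the one-dimensional
means of `e^{i α_j t}`. By linearity the two means agree on trigonometric polynomials. Both
averaging operators are contractions for the sup norm, so the means of a uniformly convergent
sequence of trigonometric polynomials form a Cauchy sequence whose limit is, by exchanging the
limits `k → ∞` and `T → ∞`, the mean of `w` and of `w ∘ f` alike.
-/

theorem exists_tendsto_of_tendstoUniformlyOnFilter {α β : Type*} [PseudoMetricSpace β]
    [CompleteSpace β] {F : ℕ → α → β} {G : α → β} {M : ℕ → β} {l : Filter α} [NeBot l]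
    (hFG : TendstoUniformlyOnFilter F G atTop l) (hM : ∀ k, Tendsto (F k) l (𝓝 (M k))) :
    ∃ L, Tendsto M atTop (𝓝 L) ∧ Tendsto G l (𝓝 L) := by
  have hM_cauchy : CauchySeq M := by
    refine Metric.cauchySeq_iff'.mpr fun ε hε => ?_
    obtain ⟨N, hN⟩ := eventually_atTop.mp
      (Metric.tendstoUniformlyOnFilter_iff.mp hFG (ε / 3) (by positivity)).curry
    refine ⟨N, fun k hk => lt_of_le_of_lt ?_ (by linarith : 2 * (ε / 3) < ε)⟩
    refine le_of_tendsto ((hM k).dist (hM N)) ?_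
    filter_upwards [hN k hk, hN N le_rfl] with x hxk hxN
    linarith [dist_triangle_left (F k x) (F N x) (G x)]
  obtain ⟨L, hL⟩ := cauchySeq_tendsto_of_complete hM_cauchy
  exact ⟨L, hL, hFG.tendsto_of_eventually_tendsto (Eventually.of_forall hM) hL⟩

section WindowMean

variable {X ι β : Type*} [MeasurableSpace X] {μ : Measure X} {l : Filter ι}
  {S : ι → Set X} {κ : ι → ℂ}

theorem tendsto_mul_setIntegral_finsetSum {A : Finset β} {g : β → X → ℂ} {c M : β → ℂ}
    (hint : ∀ a ∈ A, ∀ T, IntegrableOn (g a) (S T) μ)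
    (hM : ∀ a ∈ A, Tendsto (fun T => κ T * ∫ x in S T, g a x ∂μ) l (𝓝 (M a))) :
    Tendsto (fun T => κ T * ∫ x in S T, ∑ a ∈ A, c a * g a x ∂μ) l
      (𝓝 (∑ a ∈ A, c a * M a)) := by
  refine (tendsto_finsetSum A fun a ha => (hM a ha).const_mul (c a)).congr fun T => ?_
  rw [integral_finsetSum A fun a ha => (hint a ha T).const_mul (c a), Finset.mul_sum]
  exact Finset.sum_congr rfl fun a _ => by rw [integral_const_mul]; ring

theorem tendstoUniformlyOnFilter_mul_setIntegral {p : ℕ → X → ℂ} {w : X → ℂ}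
    (hκ : ∀ᶠ T in l, ‖κ T‖ * μ.real (S T) = 1) (hp : TendstoUniformly p w atTop)
    (hpi : ∀ k T, IntegrableOn (p k) (S T) μ) (hwi : ∀ T, IntegrableOn w (S T) μ) :
    TendstoUniformlyOnFilter (fun k T => κ T * ∫ x in S T, p k x ∂μ)
      (fun T => κ T * ∫ x in S T, w x ∂μ) atTop l := by
  refine Metric.tendstoUniformlyOnFilter_iff.mpr fun ε hε => ?_
  filter_upwards [(Metric.tendstoUniformly_iff.mp hp (ε / 2) (by positivity)).prod_mk hκ]
    with ⟨k, T⟩ ⟨hk, hT⟩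
  have hfin : μ (S T) < ⊤ := by
    refine lt_top_iff_ne_top.mpr fun h => ?_
    simp [measureReal_def, h] at hT
  have hint : ‖∫ x in S T, (w x - p k x) ∂μ‖ ≤ ε / 2 * μ.real (S T) :=
    norm_setIntegral_le_of_norm_le_const hfin fun x _ => by
      rw [← dist_eq_norm]; exact (hk x).le
  calc dist (κ T * ∫ x in S T, w x ∂μ) (κ T * ∫ x in S T, p k x ∂μ)
      = ‖κ T‖ * ‖∫ x in S T, (w x - p k x) ∂μ‖ := by
        rw [dist_eq_norm, ← mul_sub, ← integral_sub (hwi T) (hpi k T), norm_mul]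
    _ ≤ ‖κ T‖ * (ε / 2 * μ.real (S T)) := by gcongr
    _ = ε / 2 := by rw [mul_left_comm, hT, mul_one]
    _ < ε := half_lt_self hε

end WindowMean

theorem eventually_norm_inv_mul_volume_Ioc :
    ∀ᶠ T : ℝ in atTop, ‖(T : ℂ)⁻¹‖ * volume.real (Set.Ioc 0 T) = 1 := by
  filter_upwards [eventually_gt_atTop 0] with T hT
  rw [Real.volume_real_Ioc_of_le hT.le, norm_inv, Complex.norm_real, Real.norm_of_nonneg hT.le,
    sub_zero, inv_mul_cancel₀ hT.ne']

theorem eventually_norm_inv_pow_mul_volume_Icc (n : ℕ) :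
    ∀ᶠ T : ℝ in atTop,
      ‖((T : ℂ) ^ n)⁻¹‖ * volume.real (Set.Icc (0 : Fin n → ℝ) fun _ => T) = 1 := by
  filter_upwards [eventually_gt_atTop 0] with T hT
  rw [measureReal_def, Real.volume_Icc_pi, ENNReal.toReal_prod]
  simp [ENNReal.toReal_ofReal hT.le, Real.norm_of_nonneg hT.le, hT.ne']

theorem hasMeanValue1_exp_I_mul (c : ℝ) :
    HasMeanValue1 (fun t => Complex.exp (Complex.I * c * t)) (if c = 0 then 1 else 0) := by
  unfold HasMeanValue1
  split_ifs with hc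
  · refine tendsto_const_nhds.congr' ?_
    filter_upwards [eventually_gt_atTop 0] with T hT
    simp [hc, Real.volume_real_Ioc_of_le hT.le, hT.ne']
  · have hIc : Complex.I * c ≠ 0 := mul_ne_zero Complex.I_ne_zero (by exact_mod_cast hc)
    refine squeeze_zero_norm' (a := fun T => 2 / |c| * T⁻¹) ?_
      (by simpa using tendsto_inv_atTop_zero.const_mul (2 / |c|))
    filter_upwards [eventually_gt_atTop 0] with T hT
    have hint : ∫ t in Set.Ioc 0 T, Complex.exp (Complex.I * c * t)
        = (Complex.exp (Complex.I * c * T) - 1) / (Complex.I * c) := by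
      rw [← intervalIntegral.integral_of_le hT.le]
      simpa using integral_exp_mul_complex (a := 0) (b := T) hIc
    have hnum : ‖Complex.exp (Complex.I * c * T) - 1‖ ≤ 2 := by
      refine (norm_sub_le _ _).trans ?_
      rw [show Complex.I * c * T = ((c * T : ℝ) : ℂ) * Complex.I by push_cast; ring,
        Complex.norm_exp_ofReal_mul_I]
      norm_num
    rw [hint, norm_mul, norm_div, norm_inv, Complex.norm_real, Real.norm_of_nonneg hT.le,
      norm_mul, Complex.norm_I, one_mul, Complex.norm_real, Real.norm_eq_abs, mul_comm]
    gcongr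

theorem hasMeanValue_prod {n : ℕ} {g : Fin n → ℝ → ℂ} {M : Fin n → ℂ}
    (h : ∀ i, HasMeanValue1 (g i) (M i)) :
    HasMeanValue (fun s => ∏ i, g i (s i)) (∏ i, M i) := by
  refine (tendsto_finsetProd _ fun i _ => h i).congr fun T => ?_
  have hbox : ∫ s in Set.Icc (0 : Fin n → ℝ) (fun _ => T), ∏ i, g i (s i)
      = ∏ i, ∫ t in Set.Ioc 0 T, g i t := by
    rw [← Set.pi_univ_Icc, volume_pi, Measure.restrict_pi_pi, integral_fintype_prod_eq_prod]
    exact Finset.prod_congr rfl fun i _ => integral_Icc_eq_integral_Ioc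
  rw [hbox, ← inv_pow, ← Fin.prod_const, ← Finset.prod_mul_distrib]

theorem Continuous.integrableOn_comp_of_bounded {X Y : Type*} [MeasurableSpace X]
    [TopologicalSpace Y] [MeasurableSpace Y] [OpensMeasurableSpace Y] {μ : Measure X}
    {s : Set X} (hs : μ s ≠ ⊤) {g : Y → ℂ} (hg : Continuous g) (hgb : ∃ C, ∀ y, ‖g y‖ ≤ C)
    {f : X → Y} (hf : Measurable f) : IntegrableOn (fun x => g (f x)) s μ := by
  obtain ⟨C, hC⟩ := hgb
  exact Measure.integrableOn_of_bounded hs (hg.measurable.comp hf).aestronglyMeasurable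
    (ae_of_all _ fun x => hC (f x))

section TrigPoly

variable {n : ℕ}

noncomputable def trigChar (α s : Fin n → ℝ) : ℂ := Complex.exp (Complex.I * ↑(∑ i, α i * s i))

theorem continuous_trigChar (α : Fin n → ℝ) : Continuous (trigChar α) := by
  unfold trigChar; fun_prop

theorem norm_trigChar (α s : Fin n → ℝ) : ‖trigChar α s‖ = 1 := by
  rw [trigChar, mul_comm, Complex.norm_exp_ofReal_mul_I]

theorem trigChar_zero_left (s : Fin n → ℝ) : trigChar 0 s = 1 := by
  simp [trigChar]

theorem trigChar_eq_prod (α s : Fin n → ℝ) :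
    trigChar α s = ∏ i, Complex.exp (Complex.I * α i * s i) := by
  rw [trigChar, ← Complex.exp_sum]
  push_cast
  rw [Finset.mul_sum]
  simp only [mul_assoc]

theorem hasMeanValue_trigChar (α : Fin n → ℝ) :
    HasMeanValue (trigChar α) (if α = 0 then 1 else 0) := by
  have h := hasMeanValue_prod fun i => hasMeanValue1_exp_I_mul (α i)
  convert h using 1
  · exact funext (trigChar_eq_prod α)
  · simp [Finset.prod_boole, funext_iff]

theorem hasMeanValue1_trigChar_comp {f : ℝ → Fin n → ℝ}
    (hud : ∀ β : Fin n → ℝ, β ≠ 0 →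
      HasMeanValue1 (fun t => Complex.exp (2 * (↑Real.pi : ℂ) * Complex.I *
        (↑(∑ i, β i * f t i) : ℂ))) 0)
    (α : Fin n → ℝ) :
    HasMeanValue1 (fun t => trigChar α (f t)) (if α = 0 then 1 else 0) := by
  split_ifs with hα
  · simpa [hα, trigChar_zero_left] using hasMeanValue1_exp_I_mul 0
  · have hβ : (2 * Real.pi)⁻¹ • α ≠ 0 := smul_ne_zero (by positivity) hα
    convert hud _ hβ using 3 with t
    rw [trigChar]
    congr 1
    push_cast
    simp only [Pi.smul_apply, smul_eq_mul, Finset.mul_sum]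
    refine Finset.sum_congr rfl fun i _ => ?_
    push_cast
    field_simp

theorem IsTrigPoly.continuous {p : (Fin n → ℝ) → ℂ} (hp : IsTrigPoly p) : Continuous p := by
  obtain ⟨A, c, hpc⟩ := hp
  rw [funext hpc]
  exact continuous_finsetSum A fun α _ => continuous_const.mul (continuous_trigChar α)

theorem IsTrigPoly.exists_bound {p : (Fin n → ℝ) → ℂ} (hp : IsTrigPoly p) :
    ∃ C, ∀ s, ‖p s‖ ≤ C := by
  obtain ⟨A, c, hpc⟩ := hp
  refine ⟨∑ α ∈ A, ‖c α‖, fun s => (hpc s).symm ▸ (norm_sum_le _ _).trans ?_⟩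
  exact Finset.sum_le_sum fun α _ => by rw [norm_mul, ← trigChar, norm_trigChar, mul_one]

theorem IsTrigPoly.exists_hasMeanValue_and_comp {f : ℝ → Fin n → ℝ} (hf : Measurable f)
    (hud : ∀ β : Fin n → ℝ, β ≠ 0 →
      HasMeanValue1 (fun t => Complex.exp (2 * (↑Real.pi : ℂ) * Complex.I *
        (↑(∑ i, β i * f t i) : ℂ))) 0)
    {p : (Fin n → ℝ) → ℂ} (hp : IsTrigPoly p) :
    ∃ M, HasMeanValue p M ∧ HasMeanValue1 (fun t => p (f t)) M := by
  obtain ⟨A, c, hpc⟩ := hp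
  obtain rfl : p = fun s => ∑ α ∈ A, c α * trigChar α s := funext hpc
  refine ⟨_, tendsto_mul_setIntegral_finsetSum (fun α _ T => ?_)
      (fun α _ => hasMeanValue_trigChar α),
    tendsto_mul_setIntegral_finsetSum (fun α _ T => ?_)
      (fun α _ => hasMeanValue1_trigChar_comp hud α)⟩
  · exact (continuous_trigChar α).integrableOn_Icc
  · exact (continuous_trigChar α).integrableOn_comp_of_bounded measure_Ioc_lt_top.ne
      ⟨1, fun s => (norm_trigChar α s).le⟩ hf

theorem AlmostPeriodic.exists_tendstoUniformly {w : (Fin n → ℝ) → ℂ} (hw : AlmostPeriodic w) :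
    ∃ p : ℕ → (Fin n → ℝ) → ℂ, (∀ k, IsTrigPoly (p k)) ∧ TendstoUniformly p w atTop := by
  choose p hp hpw using fun k : ℕ => hw (1 / (k + 1)) Nat.one_div_pos_of_nat
  refine ⟨p, hp, Metric.tendstoUniformly_iff.mpr fun ε hε => ?_⟩
  obtain ⟨N, hN⟩ := exists_nat_one_div_lt hε
  filter_upwards [eventually_ge_atTop N] with k hk s
  refine (dist_eq_norm (w s) (p k s) ▸ hpw k s).trans_lt (lt_of_le_of_lt ?_ hN)
  gcongr

theorem AlmostPeriodic.continuous {w : (Fin n → ℝ) → ℂ} (hw : AlmostPeriodic w) :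
    Continuous w := by
  obtain ⟨p, hp, hpw⟩ := hw.exists_tendstoUniformly
  exact hpw.continuous (Frequently.of_forall fun k => (hp k).continuous)

theorem AlmostPeriodic.exists_bound {w : (Fin n → ℝ) → ℂ} (hw : AlmostPeriodic w) :
    ∃ C, ∀ s, ‖w s‖ ≤ C := by
  obtain ⟨p, hp, hpw⟩ := hw 1 one_pos
  obtain ⟨C, hC⟩ := hp.exists_bound
  exact ⟨1 + C, fun s => (norm_le_norm_sub_add (w s) (p s)).trans (add_le_add (hpw s) (hC s))⟩

end TrigPoly

theorem stmt6_general {n : ℕ} (f : ℝ → Fin n → ℝ)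
    (hf : ∀ j, Measurable (fun t => f t j))
    (hud : ∀ β : Fin n → ℝ, β ≠ 0 →
      HasMeanValue1
        (fun t => Complex.exp (2 * (↑Real.pi : ℂ) * Complex.I *
          (↑(∑ i, β i * f t i) : ℂ))) 0)
    (w : (Fin n → ℝ) → ℂ) (hap : AlmostPeriodic w) :
    ∃ M : ℂ, HasMeanValue w M ∧ HasMeanValue1 (fun t => w (f t)) M := by
  have hfm : Measurable f := measurable_pi_iff.mpr hf
  obtain ⟨p, hp, hpw⟩ := hap.exists_tendstoUniformly
  choose M hMbox hMline using fun k => (hp k).exists_hasMeanValue_and_comp hfm hud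
  obtain ⟨L, hML, hwL⟩ := exists_tendsto_of_tendstoUniformlyOnFilter
    (tendstoUniformlyOnFilter_mul_setIntegral (eventually_norm_inv_pow_mul_volume_Icc n) hpw
      (fun k T => (hp k).continuous.integrableOn_Icc)
      (fun T => hap.continuous.integrableOn_Icc)) hMbox
  obtain ⟨L', hML', hwfL'⟩ := exists_tendsto_of_tendstoUniformlyOnFilter
    (tendstoUniformlyOnFilter_mul_setIntegral eventually_norm_inv_mul_volume_Ioc (hpw.comp f)
      (fun k T => (hp k).continuous.integrableOn_comp_of_bounded measure_Ioc_lt_top.ne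
        (hp k).exists_bound hfm)
      (fun T => hap.continuous.integrableOn_comp_of_bounded measure_Ioc_lt_top.ne
        hap.exists_bound hfm)) hMline
  exact ⟨L, hwL, tendsto_nhds_unique hML' hML ▸ hwfL'⟩

/-- If `f = (f₁,…,fₙ) : ℝ → ℝⁿ` is measurable and
`(1/T)∫_0^T e^{2πi(β·f(t))} dt → 0` for all nonzero `β ∈ ℝⁿ`, then for every almost
periodic `w : ℝⁿ → ℂ`, the composite `w ∘ f` has a mean value, equal to `M(w)`. -/
theorem stmt6 {n : ℕ} (hn : 1 ≤ n) (f : ℝ → Fin n → ℝ)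
    (hf : ∀ j, Measurable (fun t => f t j))
    (hud : ∀ β : Fin n → ℝ, β ≠ 0 →
      HasMeanValue1
        (fun t => Complex.exp (2 * (↑Real.pi : ℂ) * Complex.I *
          (↑(∑ i, β i * f t i) : ℂ))) 0)
    (w : (Fin n → ℝ) → ℂ) (hap : AlmostPeriodic w) :
    ∃ M : ℂ, HasMeanValue w M ∧ HasMeanValue1 (fun t => w (f t)) M :=
  stmt6_general f hf hud w hap
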